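/- For the 3-dimensional Lie algebra example L = L(a₁,a₂), the fundamental tensor F satisfies the para-Sasakian condition F(x,y,z) = −g(φx,φy)η(z) − g(φx,φz)η(y) for all x,y,z ∈ L if and only if a₁ = 0 and a₂ = 1; moreover F vanishes identically if and only if a₁ = a₂ = 0. -/

import Mathlib

open scoped RealInnerProductSpace

noncomputable section

/-- The 3-dimensional Euclidean space underlying the Lie algebra `L(a₁,a₂)`. -/
abbrev E3 : Type := EuclideanSpace ℝ (Fin 3)

/-- The orthonormal basis vectors `E₀`, `E₁`, `E₂`. -/
def eL (i : Fin 3) : E3 := EuclideanSpace.single i 1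

/-- The Lie bracket of `L(a₁,a₂)`:
`[E₀,E₁] = -a₁E₁ - a₂E₂`, `[E₀,E₂] = -a₂E₁ + a₁E₂`, `[E₁,E₂] = 0`. -/
def lieB (a₁ a₂ : ℝ) (x y : E3) : E3 :=
  (x 0 * y 1 - x 1 * y 0) • ((-a₁) • eL 1 + (-a₂) • eL 2)
    + (x 0 * y 2 - x 2 * y 0) • ((-a₂) • eL 1 + a₁ • eL 2)

/-- The endomorphism `φ`: `φE₀ = 0`, `φE₁ = E₂`, `φE₂ = E₁`. -/
def phiL (x : E3) : E3 := x 2 • eL 1 + x 1 • eL 2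

/-- The Reeb vector `ξ = E₀`. -/
def xiL : E3 := eL 0

/-- The 1-form `η`. -/
def etaL (x : E3) : ℝ := x 0

/-- The fundamental tensor `F(x,y,z) = g(∇ₓ(φy) - φ(∇ₓy), z)`. -/
def FL (nabla : E3 → E3 → E3) (x y z : E3) : ℝ :=
  ⟪nabla x (phiL y) - phiL (nabla x y), z⟫

/-! The Koszul formula makes `F` linear in the structure constants: `F = a₂ S + a₁ T`, where `S`
(`paraSasakianL`) is the right-hand side of the identity defining `𝔽₄'`. At `(E₁,E₁,E₀)` only `S`
is nonzero and at `(E₁,E₂,E₀)` only `T`, so `F = c S` exactly when `a₁ = 0` and `a₂ = c`; take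
`c = 1` and `c = 0`. -/

lemma inner_E3 (u v : E3) : ⟪u, v⟫ = u 0 * v 0 + u 1 * v 1 + u 2 * v 2 := by
  simp [PiLp.inner_apply, Fin.sum_univ_three, mul_comm]

lemma eL_apply (i j : Fin 3) : eL i j = if j = i then 1 else 0 := by
  simp [eL]

@[simp] lemma phiL_apply_zero (x : E3) : phiL x 0 = 0 := by simp [phiL, eL_apply]
@[simp] lemma phiL_apply_one (x : E3) : phiL x 1 = x 2 := by simp [phiL, eL_apply]
@[simp] lemma phiL_apply_two (x : E3) : phiL x 2 = x 1 := by simp [phiL, eL_apply]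

section Bracket

variable (a₁ a₂ : ℝ) (x y : E3)

@[simp] lemma lieB_apply_zero : lieB a₁ a₂ x y 0 = 0 := by simp [lieB, eL_apply]

@[simp] lemma lieB_apply_one :
    lieB a₁ a₂ x y 1 = -a₁ * (x 0 * y 1 - x 1 * y 0) - a₂ * (x 0 * y 2 - x 2 * y 0) := by
  simp [lieB, eL_apply]; ring

@[simp] lemma lieB_apply_two :
    lieB a₁ a₂ x y 2 = -a₂ * (x 0 * y 1 - x 1 * y 0) + a₁ * (x 0 * y 2 - x 2 * y 0) := by
  simp [lieB, eL_apply]; ring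

end Bracket

lemma inner_phiL_left (u v : E3) : ⟪phiL u, v⟫ = ⟪u, phiL v⟫ := by
  simp only [inner_E3, phiL_apply_zero, phiL_apply_one, phiL_apply_two]; ring

def paraSasakianL (x y z : E3) : ℝ :=
  -⟪phiL x, phiL y⟫ * etaL z - ⟪phiL x, phiL z⟫ * etaL y

def twistL (x y z : E3) : ℝ :=
  (x 2 * y 1 - x 1 * y 2) * z 0 + (x 2 * z 1 - x 1 * z 2) * y 0

section LeviCivita

variable {a₁ a₂ : ℝ} {nabla : E3 → E3 → E3}

/-- Since `φ` is symmetric, `F(x,y,z) = g(∇ₓ(φy), z) - g(∇ₓy, φz)`, and both terms are given by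
the Koszul formula. -/
theorem FL_eq_of_koszul
    (hK : ∀ x y z : E3, 2 * ⟪nabla x y, z⟫ =
      ⟪lieB a₁ a₂ x y, z⟫ + ⟪lieB a₁ a₂ z x, y⟫ + ⟪lieB a₁ a₂ z y, x⟫)
    (x y z : E3) :
    FL nabla x y z = a₂ * paraSasakianL x y z + a₁ * twistL x y z := by
  have hφy := hK x (phiL y) z
  have hφz := hK x y (phiL z)
  rw [FL, inner_sub_left, inner_phiL_left]
  simp only [paraSasakianL, twistL, etaL, inner_E3, lieB_apply_zero, lieB_apply_one,
    lieB_apply_two, phiL_apply_zero, phiL_apply_one, phiL_apply_two] at hφy hφz ⊢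
  linarith

theorem FL_eq_mul_paraSasakianL_iff
    (hK : ∀ x y z : E3, 2 * ⟪nabla x y, z⟫ =
      ⟪lieB a₁ a₂ x y, z⟫ + ⟪lieB a₁ a₂ z x, y⟫ + ⟪lieB a₁ a₂ z y, x⟫) (c : ℝ) :
    (∀ x y z : E3, FL nabla x y z = c * paraSasakianL x y z) ↔ a₁ = 0 ∧ a₂ = c := by
  simp only [FL_eq_of_koszul hK]
  constructor
  · intro h
    have h₁₁₀ := h (eL 1) (eL 1) (eL 0)
    have h₁₂₀ := h (eL 1) (eL 2) (eL 0)
    simp only [paraSasakianL, twistL, etaL, inner_E3, phiL_apply_zero, phiL_apply_one,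
      phiL_apply_two] at h₁₁₀ h₁₂₀
    simp [eL_apply] at h₁₁₀ h₁₂₀
    exact ⟨h₁₂₀, h₁₁₀⟩
  · rintro ⟨rfl, rfl⟩ x y z
    ring

end LeviCivita

/-- `L(a₁,a₂)` is para-Sasakian iff `a₁ = 0` and `a₂ = 1`;
its fundamental tensor vanishes iff `a₁ = a₂ = 0`. -/
theorem statement19 (a₁ a₂ : ℝ) (nabla : E3 → E3 → E3)
    (hK : ∀ x y z : E3, 2 * ⟪nabla x y, z⟫ =
      ⟪lieB a₁ a₂ x y, z⟫ + ⟪lieB a₁ a₂ z x, y⟫ + ⟪lieB a₁ a₂ z y, x⟫) :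
    ((∀ x y z : E3, FL nabla x y z =
        -⟪phiL x, phiL y⟫ * etaL z - ⟪phiL x, phiL z⟫ * etaL y) ↔ (a₁ = 0 ∧ a₂ = 1)) ∧
    ((∀ x y z : E3, FL nabla x y z = 0) ↔ (a₁ = 0 ∧ a₂ = 0)) := by
  constructor
  · simpa [paraSasakianL] using FL_eq_mul_paraSasakianL_iff hK 1
  · simpa using FL_eq_mul_paraSasakianL_iff hK 0
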